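/- Let a : ℕ → ℝ satisfy a(2t) ≤ 2a(t) + C t^{1/2+δ} for all t ≥ t_0, where δ ∈ (0, 1/2) and C > 0, and suppose p := lim_{k→∞} a(2^k t)/(2^k t) exists for each t. Then for all t ≥ t_0, a(t)/t ≥ p − C' t^{−(1/2−δ)} where C' = C / (1 − 2^{−(1/2−δ)}). -/
import Mathlib


open Filter Real

/-- If `a(2t) ≤ 2a(t) + C t^{1/2+δ}` for all `t ≥ t₀` with `δ ∈ (0,1/2)`,
and `p = lim_k a(2^k t)/(2^k t)` for each `t ≥ t₀`, then for all `t ≥ t₀`,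
`a(t)/t ≥ p − C' t^{−(1/2−δ)}` with `C' = C/(1 − 2^{−(1/2−δ)})`. -/
theorem stmt18 (a : ℝ → ℝ) (t0 δ C p : ℝ) (ht0 : 0 < t0) (hδ0 : 0 < δ) (hδ : δ < 1 / 2)
    (hC : 0 < C)
    (hdouble : ∀ t : ℝ, t0 ≤ t → a (2 * t) ≤ 2 * a t + C * t ^ ((1 : ℝ) / 2 + δ))
    (hlim : ∀ t : ℝ, t0 ≤ t →
      Tendsto (fun k : ℕ => a ((2 : ℝ) ^ k * t) / ((2 : ℝ) ^ k * t)) atTop (nhds p)) :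
    ∀ t : ℝ, t0 ≤ t →
      a t / t ≥ p - (C / (1 - (2 : ℝ) ^ (-((1 : ℝ) / 2 - δ)))) * t ^ (-((1 : ℝ) / 2 - δ)) := by
  intro t ht
  have ht' : 0 < t := lt_of_lt_of_le ht0 ht
  set e : ℝ := -((1 : ℝ) / 2 - δ) with he
  have he_neg : e < 0 := by rw [he]; linarith
  set r : ℝ := (2 : ℝ) ^ e with hr
  have hr0 : 0 < r := Real.rpow_pos_of_pos two_pos e
  have hr1 : r < 1 := Real.rpow_lt_one_of_one_lt_of_neg one_lt_two he_neg
  have hte : 0 < t ^ e := Real.rpow_pos_of_pos ht' e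
  have hrk : ∀ k : ℕ, ((2 : ℝ) ^ k) ^ e = r ^ k := by
    intro k
    rw [← Real.rpow_natCast (2 : ℝ) k, ← Real.rpow_natCast r k, hr,
      ← Real.rpow_mul (by norm_num), ← Real.rpow_mul (by norm_num)]
    ring_nf
  -- key inductive bound
  have key : ∀ k : ℕ, a ((2 : ℝ) ^ k * t) / ((2 : ℝ) ^ k * t) ≤
      a t / t + (C / 2) * t ^ e * ∑ i ∈ Finset.range k, r ^ i := by
    intro k
    induction k with
    | zero => simp
    | succ k ih =>
      have hsk : (0 : ℝ) < (2 : ℝ) ^ k := by positivity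
      set x : ℝ := (2 : ℝ) ^ k * t with hx
      have hx0 : 0 < x := by positivity
      have hst : t ≤ x := le_mul_of_one_le_left ht'.le (one_le_pow₀ (by norm_num))
      have h1 := hdouble x (le_trans ht hst)
      have hexp : (1 : ℝ) / 2 + δ = 1 + e := by rw [he]; ring
      have hxe : x ^ ((1 : ℝ) / 2 + δ) = x * (r ^ k * t ^ e) := by
        rw [hexp, Real.rpow_add hx0, Real.rpow_one, hx,
          Real.mul_rpow (le_of_lt hsk) ht'.le, hrk k]
      have h2 : (2 : ℝ) ^ (k + 1) * t = 2 * x := by rw [hx]; ring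
      have step : a ((2 : ℝ) ^ (k + 1) * t) / ((2 : ℝ) ^ (k + 1) * t) ≤
          a x / x + (C / 2) * (r ^ k * t ^ e) := by
        rw [h2]
        rw [div_le_iff₀ (by positivity)]
        calc a (2 * x) ≤ 2 * a x + C * x ^ ((1 : ℝ) / 2 + δ) := h1
          _ = (a x / x + C / 2 * (r ^ k * t ^ e)) * (2 * x) := by
              rw [hxe]; field_simp
      calc a ((2 : ℝ) ^ (k + 1) * t) / ((2 : ℝ) ^ (k + 1) * t)
          ≤ a x / x + (C / 2) * (r ^ k * t ^ e) := step
        _ ≤ (a t / t + (C / 2) * t ^ e * ∑ i ∈ Finset.range k, r ^ i)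
            + (C / 2) * (r ^ k * t ^ e) := by
              have := ih
              rw [hx] at *
              linarith
        _ = a t / t + (C / 2) * t ^ e * ∑ i ∈ Finset.range (k + 1), r ^ i := by
              rw [Finset.sum_range_succ]; ring
  -- bound the geometric sum
  have sum_le : ∀ k : ℕ, ∑ i ∈ Finset.range k, r ^ i ≤ 1 / (1 - r) := by
    intro k
    rw [geom_sum_eq (ne_of_lt hr1),
      show r ^ k - 1 = -(1 - r ^ k) by ring, show r - 1 = -(1 - r) by ring,
      neg_div_neg_eq, div_le_div_iff₀ (by linarith) (by linarith)]
    have : (0 : ℝ) ≤ r ^ k := by positivity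
    nlinarith
  have key2 : ∀ k : ℕ, a ((2 : ℝ) ^ k * t) / ((2 : ℝ) ^ k * t) ≤
      a t / t + (C / (1 - r)) * t ^ e := by
    intro k
    refine le_trans (key k) ?_
    have h1 : (C / 2) * t ^ e * ∑ i ∈ Finset.range k, r ^ i ≤
        (C / 2) * t ^ e * (1 / (1 - r)) :=
      mul_le_mul_of_nonneg_left (sum_le k) (by positivity)
    have h2 : (C / 2) * t ^ e * (1 / (1 - r)) ≤ (C / (1 - r)) * t ^ e := by
      have hpos : (0 : ℝ) < 1 - r := by linarith
      rw [show (C / (1 - r)) * t ^ e = C * t ^ e * (1 / (1 - r)) by ring]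
      have hs : (0 : ℝ) ≤ 1 / (1 - r) := by positivity
      have hmul : (C / 2) * t ^ e ≤ C * t ^ e := by nlinarith
      exact mul_le_mul_of_nonneg_right hmul hs
    linarith
  have hp : p ≤ a t / t + (C / (1 - r)) * t ^ e :=
    le_of_tendsto (hlim t ht) (Filter.Eventually.of_forall key2)
  linarith
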